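/- Let φv ≠ 0 be a real constant, let v : [t₀, t₁] → ℝ satisfy v(t)² = 1 for all t, and let β, λθ : [t₀, t₁] → ℝ be differentiable functions and ω : [t₀, t₁] → ℝ a function satisfying λθ'(t) = v(t)·λθ(t)·cos(β(t)), β'(t) = ω(t) − v(t)·sin(β(t)), and ω(t) = v(t)·λθ(t)/φv for all t ∈ [t₀, t₁]. Then for every t ∈ [t₀, t₁], λθ(t) = φv·sin(β(t)) + ε(t)·√(λθ(t₀)² − 2·φv·λθ(t₀)·sin(β(t₀)) + φv²·sin²(β(t))) for some ε(t) ∈ {−1, 1}; equivalently, (λθ(t) − φv·sin(β(t)))² = λθ(t₀)² − 2·φv·λθ(t₀)·sin(β(t₀)) + φv²·sin²(β(t)). -/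

import Mathlib

/-!
Along the singular arc the quantity `λθ² − 2 φv λθ sin β` is a first integral: substituting
`ω = v λθ / φv`, the two terms of its derivative cancel. Completing the square turns its
conservation into the stated identity, and the sign of `λθ − φv sin β` supplies `ε`.
-/

open Real Set

theorem constant_of_hasDerivAt_zero_on_Icc {f : ℝ → ℝ} {a b : ℝ}
    (hf : ∀ x ∈ Icc a b, HasDerivAt f 0 x) : ∀ x ∈ Icc a b, f x = f a :=
  constant_of_has_deriv_right_zero
    (fun x hx => (hf x hx).continuousAt.continuousWithinAt)
    (fun x hx => (hf x (Ico_subset_Icc_self hx)).hasDerivWithinAt)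

theorem hasDerivAt_sq_sub_mul_sin_eq_zero {l β : ℝ → ℝ} {φ v t : ℝ} (hφ : φ ≠ 0)
    (hl : HasDerivAt l (v * l t * cos (β t)) t)
    (hβ : HasDerivAt β (v * l t / φ - v * sin (β t)) t) :
    HasDerivAt (fun s => l s ^ 2 - 2 * φ * l s * sin (β s)) 0 t := by
  refine ((hl.fun_pow 2).fun_sub ((hl.const_mul (2 * φ)).fun_mul hβ.sin)).congr_deriv ?_
  field_simp
  ring

theorem exists_sign_mul_sqrt_sq (a : ℝ) : ∃ ε : ℝ, (ε = -1 ∨ ε = 1) ∧ a = ε * √(a ^ 2) := by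
  rw [sqrt_sq_eq_abs]
  rcases le_or_gt 0 a with ha | ha
  · exact ⟨1, Or.inr rfl, by rw [abs_of_nonneg ha, one_mul]⟩
  · exact ⟨-1, Or.inl rfl, by rw [abs_of_neg ha]; ring⟩

theorem stmt10_general (t₀ t₁ : ℝ) (φv : ℝ) (hφv : φv ≠ 0)
    (v ω β lθ : ℝ → ℝ)
    (hlθ : ∀ t ∈ Icc t₀ t₁, HasDerivAt lθ (v t * lθ t * Real.cos (β t)) t)
    (hβ : ∀ t ∈ Icc t₀ t₁, HasDerivAt β (ω t - v t * Real.sin (β t)) t)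
    (hω : ∀ t ∈ Icc t₀ t₁, ω t = v t * lθ t / φv) :
    ∀ t ∈ Icc t₀ t₁,
      (lθ t - φv * Real.sin (β t)) ^ 2
        = (lθ t₀) ^ 2 - 2 * φv * lθ t₀ * Real.sin (β t₀)
          + φv ^ 2 * (Real.sin (β t)) ^ 2 ∧
      ∃ ε : ℝ, (ε = -1 ∨ ε = 1) ∧
        lθ t = φv * Real.sin (β t)
          + ε * Real.sqrt ((lθ t₀) ^ 2 - 2 * φv * lθ t₀ * Real.sin (β t₀)
            + φv ^ 2 * (Real.sin (β t)) ^ 2) := by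
  intro t ht
  have hconserved : lθ t ^ 2 - 2 * φv * lθ t * sin (β t)
      = lθ t₀ ^ 2 - 2 * φv * lθ t₀ * sin (β t₀) :=
    constant_of_hasDerivAt_zero_on_Icc (fun s hs =>
      hasDerivAt_sq_sub_mul_sin_eq_zero hφv (hlθ s hs) (hω s hs ▸ hβ s hs)) t ht
  have hsquare : (lθ t - φv * sin (β t)) ^ 2
      = lθ t₀ ^ 2 - 2 * φv * lθ t₀ * sin (β t₀) + φv ^ 2 * sin (β t) ^ 2 := by
    linear_combination hconserved
  obtain ⟨ε, hε, hsign⟩ := exists_sign_mul_sqrt_sq (lθ t - φv * sin (β t))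
  exact ⟨hsquare, ε, hε, by rw [← hsquare]; linarith⟩

/-- Lemma 1 of the paper: Along a `φω`-singular primitive,
`λθ t = φv sin β t ± √(λθ t₀² − 2 φv λθ t₀ sin β t₀ + φv² sin² β t)`;
equivalently `(λθ t − φv sin β t)² = λθ t₀² − 2 φv λθ t₀ sin β t₀ + φv² sin² β t`. -/
theorem stmt10 (t₀ t₁ : ℝ) (ht : t₀ ≤ t₁) (φv : ℝ) (hφv : φv ≠ 0)
    (v ω β lθ : ℝ → ℝ) (hv : ∀ t ∈ Icc t₀ t₁, (v t) ^ 2 = 1)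
    (hlθ : ∀ t ∈ Icc t₀ t₁, HasDerivAt lθ (v t * lθ t * Real.cos (β t)) t)
    (hβ : ∀ t ∈ Icc t₀ t₁, HasDerivAt β (ω t - v t * Real.sin (β t)) t)
    (hω : ∀ t ∈ Icc t₀ t₁, ω t = v t * lθ t / φv) :
    ∀ t ∈ Icc t₀ t₁,
      (lθ t - φv * Real.sin (β t)) ^ 2
        = (lθ t₀) ^ 2 - 2 * φv * lθ t₀ * Real.sin (β t₀)
          + φv ^ 2 * (Real.sin (β t)) ^ 2 ∧
      ∃ ε : ℝ, (ε = -1 ∨ ε = 1) ∧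
        lθ t = φv * Real.sin (β t)
          + ε * Real.sqrt ((lθ t₀) ^ 2 - 2 * φv * lθ t₀ * Real.sin (β t₀)
            + φv ^ 2 * (Real.sin (β t)) ^ 2) :=
  stmt10_general t₀ t₁ φv hφv v ω β lθ hlθ hβ hω
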